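/- A Hausdorff topological group G is ω-balanced and a strict q-space if and only if for each open neighborhood O of the identity in G there is a closed sequentially compact invariant (normal) subgroup H which is of countable character in G, such that H ⊆ O, the canonical quotient mapping p : G → G/H is sequential-perfect, and the quotient space G/H is metrizable. -/

import Mathlib

open Filter Topology Set Pointwise TopologicalSpace

universe u

section Defs

variable {X : Type*}

/-- A subset `s` of a topological space is countably compact (in the ambient space) if every
countable open cover of `s` (indexed by `ℕ`) has a finite subcover. -/
def IsCountablyCompactIn [TopologicalSpace X] (s : Set X) : Prop :=
  ∀ U : ℕ → Set X, (∀ n, IsOpen (U n)) → s ⊆ ⋃ n, U n → ∃ t : Finset ℕ, s ⊆ ⋃ n ∈ t, U n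

/-- `U` is a q-sequence at `x`: a sequence of open neighbourhoods of `x` such that every
sequence of points chosen from the `U n` has an accumulation (cluster) point in `X`. -/
def IsQSequenceAt [TopologicalSpace X] (x : X) (U : ℕ → Set X) : Prop :=
  (∀ n, IsOpen (U n) ∧ x ∈ U n) ∧
    ∀ u : ℕ → X, (∀ n, u n ∈ U n) → ∃ p : X, MapClusterPt p Filter.atTop u

/-- A space is a q-space if every point has a q-sequence. -/
def QSpace (X : Type*) [TopologicalSpace X] : Prop :=
  ∀ x : X, ∃ U : ℕ → Set X, IsQSequenceAt x U

/-- A space is a strict q-space if every point has a q-sequence whose intersection is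
sequentially compact. -/
def StrictQSpace (X : Type*) [TopologicalSpace X] : Prop :=
  ∀ x : X, ∃ U : ℕ → Set X, IsQSequenceAt x U ∧ IsSeqCompact (⋂ n, U n)

/-- `U` is a strong q-sequence at `x`: a sequence of open neighbourhoods of `x` such that every
sequence of points chosen from the `U n` has a convergent subsequence. -/
def IsStrongQSequenceAt [TopologicalSpace X] (x : X) (U : ℕ → Set X) : Prop :=
  (∀ n, IsOpen (U n) ∧ x ∈ U n) ∧
    ∀ u : ℕ → X, (∀ n, u n ∈ U n) →
      ∃ (p : X) (φ : ℕ → ℕ), StrictMono φ ∧ Filter.Tendsto (u ∘ φ) Filter.atTop (nhds p)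

/-- A space is a strong q-space if every point has a strong q-sequence. -/
def StrongQSpace (X : Type*) [TopologicalSpace X] : Prop :=
  ∀ x : X, ∃ U : ℕ → Set X, IsStrongQSequenceAt x U

/-- A subset `A` is of countable character in `X` if there is a countable family of open
neighbourhoods of `A` such that every open neighbourhood of `A` contains a member of it. -/
def HasCountableCharacter [TopologicalSpace X] (A : Set X) : Prop :=
  ∃ U : ℕ → Set X, (∀ n, IsOpen (U n) ∧ A ⊆ U n) ∧
    ∀ W : Set X, IsOpen W → A ⊆ W → ∃ n, U n ⊆ W

/-- A topological group is ω-balanced if for every neighbourhood `U` of the identity there is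
a countable family `γ` of open neighbourhoods of the identity such that for every `x` some
`V ∈ γ` satisfies `xVx⁻¹ ⊆ U`. -/
def OmegaBalanced (G : Type*) [Group G] [TopologicalSpace G] : Prop :=
  ∀ U : Set G, U ∈ nhds (1 : G) → ∃ γ : Set (Set G), γ.Countable ∧
    (∀ V ∈ γ, IsOpen V ∧ (1 : G) ∈ V) ∧
    ∀ x : G, ∃ V ∈ γ, ∀ v ∈ V, x * v * x⁻¹ ∈ U

/-- A topological group is ω-narrow if for every open neighbourhood `V` of the identity there
is a countable set `A` with `A * V = G`. -/
def OmegaNarrow (G : Type*) [Group G] [TopologicalSpace G] : Prop :=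
  ∀ V : Set G, IsOpen V → (1 : G) ∈ V → ∃ A : Set G, A.Countable ∧ A * V = Set.univ

/-- A topological group is feathered if it has a nonempty compact subset of countable
character. -/
def IsFeathered (G : Type*) [Group G] [TopologicalSpace G] : Prop :=
  ∃ K : Set G, K.Nonempty ∧ IsCompact K ∧ HasCountableCharacter K

/-- A subgroup `H` of a topological group is neutral if for every open neighbourhood `U` of the
identity there is an open neighbourhood `V` of the identity with `HV ⊆ UH`. -/
def IsNeutralSubgroup {G : Type*} [Group G] [TopologicalSpace G] (H : Subgroup G) : Prop :=
  ∀ U : Set G, IsOpen U → (1 : G) ∈ U →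
    ∃ V : Set G, IsOpen V ∧ (1 : G) ∈ V ∧ (H : Set G) * V ⊆ U * (H : Set G)

end Defs

/-!
Forward direction: using ω-balancedness, close the q-sequence at the identity (cut down to `O`)
under symmetric square roots and under countably many conjugation-shrinkings. The intersection of
the resulting countable family of neighbourhoods is a closed normal subgroup `H`, and the finite
intersections of the family (with the q-sequence) form a decreasing sequence of neighbourhoods of
`H` along which every selection clusters in `H`. This yields the countable character of `H`, hence
first countability and metrizability of `G ⧸ H`, and together with the sequential compactness of
`H` the closedness of the quotient map.

Backward direction: conjugating a countable neighbourhood base of a small normal subgroup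
witnesses ω-balancedness, and the preimages of a shrinking neighbourhood base at the image of a
point form a q-sequence, because the quotient map is closed with sequentially compact fibres.
-/

section Topology

variable {X Y : Type*} [TopologicalSpace X] [TopologicalSpace Y]

theorem IsSeqCompact.of_isClosed_subset {s t : Set X} (hs : IsSeqCompact s) (ht : IsClosed t)
    (hts : t ⊆ s) : IsSeqCompact t := by
  intro u hu
  obtain ⟨a, -, φ, hφ, hlim⟩ := hs fun n => hts (hu n)
  exact ⟨a, ht.mem_of_tendsto hlim (Eventually.of_forall fun n => hu (φ n)), φ, hφ, hlim⟩

theorem MapClusterPt.prodMk_of_tendsto {a : ℕ → X} {b : ℕ → Y} {p : X} {q : Y}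
    (ha : MapClusterPt p atTop a) (hb : Tendsto b atTop (𝓝 q)) :
    MapClusterPt (p, q) atTop fun n => (a n, b n) := by
  rw [mapClusterPt_iff_frequently]
  intro s hs
  obtain ⟨A, hA, B, hB, hAB⟩ := mem_nhds_prod_iff.1 hs
  exact ((mapClusterPt_iff_frequently.1 ha A hA).and_eventually (hb hB)).mono
    fun n hn => hAB (mk_mem_prod hn.1 hn.2)

/-- The closures of the tails of `u` are closed sets meeting the fibre over `y`, and a limit of
points picked there from the fibre is a cluster point of `u`. -/
theorem IsClosedMap.exists_mapClusterPt_of_tendsto {f : X → Y} (hf : IsClosedMap f) {y : Y}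
    (hy : IsSeqCompact (f ⁻¹' {y})) {u : ℕ → X} (hu : Tendsto (f ∘ u) atTop (𝓝 y)) :
    ∃ p, MapClusterPt p atTop u := by
  set T : ℕ → Set X := fun k => closure (u '' Ici k)
  have hT : Antitone T := fun k l hkl => closure_mono (image_mono (Ici_subset_Ici.2 hkl))
  have hfiber : ∀ k, ∃ z ∈ T k, f z = y := by
    intro k
    have hy_mem : y ∈ closure (f '' (u '' Ici k)) :=
      mem_closure_of_tendsto hu <|
        (eventually_ge_atTop k).mono fun n hn => ⟨u n, ⟨n, hn, rfl⟩, rfl⟩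
    exact (hf _ isClosed_closure).closure_subset_iff.2 (image_mono subset_closure) hy_mem
  choose z hzT hzy using hfiber
  obtain ⟨p, -, φ, hφ, hlim⟩ := hy fun k => hzy k
  refine ⟨p, mapClusterPt_atTop_iff_forall_mem_closure.2 fun k => ?_⟩
  refine isClosed_closure.mem_of_tendsto hlim ((eventually_ge_atTop k).mono fun n hn => ?_)
  exact hT (hn.trans (hφ.id_le n)) (hzT (φ n))

theorem strictQSpace_of_isClosedMap [FirstCountableTopology Y] [T1Space Y] {f : X → Y}
    (hf : Continuous f) (hcl : IsClosedMap f) (hfib : ∀ y, IsSeqCompact (f ⁻¹' {y})) :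
    StrictQSpace X := by
  intro x
  obtain ⟨B, hB, hbasis⟩ := (nhds_basis_opens (f x)).exists_antitone_subbasis
  refine ⟨fun n => f ⁻¹' B n, ⟨fun n => ⟨(hB n).2.preimage hf, (hB n).1⟩, fun u hu => ?_⟩, ?_⟩
  · exact hcl.exists_mapClusterPt_of_tendsto (hfib (f x)) (hbasis.tendsto hu)
  · have hker : ⋂ n, B n = {f x} := by
      simpa using hbasis.toHasBasis.ker.symm.trans (ker_nhds (f x))
    rw [← preimage_iInter, hker]
    exact hfib (f x)

def SelectionsClusterIn (K : Set X) (F : ℕ → Set X) : Prop :=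
  ∀ g : ℕ → X, (∀ m, g m ∈ F m) → ∃ q ∈ K, MapClusterPt q atTop g

theorem SelectionsClusterIn.hasCountableCharacter {K : Set X} {F : ℕ → Set X}
    (hF : SelectionsClusterIn K F) (hFo : ∀ m, IsOpen (F m) ∧ K ⊆ F m) :
    HasCountableCharacter K := by
  refine ⟨F, hFo, fun O hO hKO => ?_⟩
  by_contra! h
  choose g hgF hgO using fun m => not_subset.1 (h m)
  obtain ⟨q, hqK, hq⟩ := hF g hgF
  obtain ⟨m, hm⟩ := (mapClusterPt_iff_frequently.1 hq O (hO.mem_nhds (hKO hqK))).exists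
  exact hgO m hm

theorem IsQSequenceAt.exists_antitone_selectionsClusterIn {x : X} {U W : ℕ → Set X}
    (hU : IsQSequenceAt x U) (hWo : ∀ n, IsOpen (W n))
    (hWcl : ∀ n, ∃ k, closure (W k) ⊆ W n) (hWU : ∀ n, ⋂ k, W k ⊆ U n) :
    ∃ F : ℕ → Set X, Antitone F ∧ (∀ m, IsOpen (F m) ∧ ⋂ k, W k ⊆ F m) ∧
      SelectionsClusterIn (⋂ k, W k) F := by
  refine ⟨fun m => ⋂ j ∈ Iic m, W j ∩ U j, ?_, fun m => ⟨?_, ?_⟩, fun g hg => ?_⟩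
  · exact fun m m' hm => biInter_mono (Iic_subset_Iic.2 hm) fun _ _ => Subset.rfl
  · exact (finite_Iic m).isOpen_biInter fun j _ => (hWo j).inter (hU.1 j).1
  · exact fun y hy => mem_iInter₂.2 fun j _ => ⟨mem_iInter.1 hy j, hWU j hy⟩
  have hgWU : ∀ j m, j ≤ m → g m ∈ W j ∩ U j := fun j m hjm => mem_iInter₂.1 (hg m) j hjm
  obtain ⟨q, hq⟩ := hU.2 g fun m => (hgWU m m le_rfl).2
  refine ⟨q, mem_iInter.2 fun n => ?_, hq⟩
  obtain ⟨k, hk⟩ := hWcl n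
  exact hk (isClosed_closure.mem_of_mapClusterPt hq
    ((eventually_ge_atTop k).mono fun m hm => subset_closure (hgWU k m hm).1))

end Topology

theorem exists_seq_closed_under {α : Type*} (V : ℕ → α) (step : ℕ → α → α) :
    ∃ W : ℕ → α, (∀ n, ∃ k, W k = V n) ∧ ∀ n i, ∃ k, W k = step i (W n) := by
  let W' : ℕ × List ℕ → α := fun q => q.2.foldr step (V q.1)
  refine ⟨fun k => W' (Denumerable.ofNat _ k), fun n => ⟨Encodable.encode (n, ([] : List ℕ)), ?_⟩,
    fun n i => ?_⟩
  · simp [W']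
  · set q := Denumerable.ofNat (ℕ × List ℕ) n
    exact ⟨Encodable.encode (q.1, i :: q.2), by simp [W', q]⟩

section Group

variable {G : Type*} [Group G] [TopologicalSpace G]

structure IsNormalSubgroupSeq (W : ℕ → Set G) : Prop where
  isOpen : ∀ n, IsOpen (W n)
  one_mem : ∀ n, (1 : G) ∈ W n
  exists_mul_subset : ∀ n, ∃ k, W k * W k ⊆ W n
  exists_inv_subset : ∀ n, ∃ k, (W k)⁻¹ ⊆ W n
  exists_closure_subset : ∀ n, ∃ k, closure (W k) ⊆ W n
  exists_conj_subset : ∀ n (x : G), ∃ k, ∀ v ∈ W k, x * v * x⁻¹ ∈ W n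

namespace IsNormalSubgroupSeq

variable {W : ℕ → Set G} (hW : IsNormalSubgroupSeq W)

def subgroup : Subgroup G where
  carrier := ⋂ n, W n
  one_mem' := mem_iInter.2 hW.one_mem
  mul_mem' {a b} ha hb := mem_iInter.2 fun n => by
    obtain ⟨k, hk⟩ := hW.exists_mul_subset n
    exact hk (mul_mem_mul (mem_iInter.1 ha k) (mem_iInter.1 hb k))
  inv_mem' {a} ha := mem_iInter.2 fun n => by
    obtain ⟨k, hk⟩ := hW.exists_inv_subset n
    exact hk (inv_mem_inv.2 (mem_iInter.1 ha k))

theorem subgroup_subset (n : ℕ) : (hW.subgroup : Set G) ⊆ W n := iInter_subset W n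

theorem subgroup_normal : hW.subgroup.Normal where
  conj_mem a ha x := mem_iInter.2 fun n => by
    obtain ⟨k, hk⟩ := hW.exists_conj_subset n x
    exact hk a (mem_iInter.1 ha k)

theorem isClosed_subgroup : IsClosed (hW.subgroup : Set G) := by
  have hclosure : (hW.subgroup : Set G) = ⋂ n, closure (W n) := by
    refine (iInter_mono fun n => subset_closure).antisymm (subset_iInter fun n => ?_)
    obtain ⟨k, hk⟩ := hW.exists_closure_subset n
    exact (iInter_subset _ k).trans hk
  rw [hclosure]
  exact isClosed_iInter fun n => isClosed_closure

end IsNormalSubgroupSeq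

theorem OmegaBalanced.exists_seq_conj_subset (h : OmegaBalanced G) {U : Set G}
    (hU : U ∈ 𝓝 1) :
    ∃ e : ℕ → OpenNhdsOf (1 : G), ∀ x : G, ∃ k, ∀ v ∈ e k, x * v * x⁻¹ ∈ U := by
  obtain ⟨γ, hγc, hγo, hγx⟩ := h U hU
  have hne : γ.Nonempty := let ⟨V, hV, _⟩ := hγx 1; ⟨V, hV⟩
  obtain ⟨e, he⟩ := hγc.exists_eq_range hne
  have heγ : ∀ k, e k ∈ γ := fun k => he ▸ mem_range_self k
  refine ⟨fun k => ⟨⟨e k, (hγo _ (heγ k)).1⟩, (hγo _ (heγ k)).2⟩, fun x => ?_⟩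
  obtain ⟨V, hVγ, hV⟩ := hγx x
  obtain ⟨k, rfl⟩ := he ▸ hVγ
  exact ⟨k, hV⟩

variable [IsTopologicalGroup G]

theorem exists_openNhdsOf_one_mul_inv_closure_subset {U : Set G} (hU : U ∈ 𝓝 1) :
    ∃ S : OpenNhdsOf (1 : G),
      (S : Set G) * S ⊆ U ∧ (S : Set G)⁻¹ ⊆ U ∧ closure (S : Set G) ⊆ U := by
  obtain ⟨V, hV, hVc, hVinv, hVU⟩ := exists_closed_nhds_one_inv_eq_mul_subset hU
  have hVsub : V ⊆ U := fun v hv => hVU (by simpa using mul_mem_mul hv (mem_of_mem_nhds hV))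
  refine ⟨⟨⟨interior V, isOpen_interior⟩, mem_interior_iff_mem_nhds.2 hV⟩,
    (mul_subset_mul interior_subset interior_subset).trans hVU, ?_,
    (closure_minimal interior_subset hVc).trans hVsub⟩
  exact (inv_subset_inv.2 interior_subset).trans (by rwa [hVinv])

/-- Close the seeds `V n` under a symmetric-square-root operation and under the countably many
conjugation-shrinking operations provided by ω-balancedness. -/
theorem OmegaBalanced.exists_isNormalSubgroupSeq (h : OmegaBalanced G)
    (V : ℕ → OpenNhdsOf (1 : G)) :
    ∃ W : ℕ → Set G, IsNormalSubgroupSeq W ∧ ∀ n, ∃ k, W k = V n := by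
  choose root hroot using fun S : OpenNhdsOf (1 : G) =>
    exists_openNhdsOf_one_mul_inv_closure_subset (S.isOpen.mem_nhds S.mem)
  choose conj hconj using fun S : OpenNhdsOf (1 : G) =>
    h.exists_seq_conj_subset (S.isOpen.mem_nhds S.mem)
  let step : ℕ → OpenNhdsOf (1 : G) → OpenNhdsOf (1 : G)
    | 0, S => root S
    | i + 1, S => conj S i
  obtain ⟨W, hseed, hstep⟩ := exists_seq_closed_under V step
  have hroot_step : ∀ n, ∃ k, (W k : Set G) * W k ⊆ W n ∧ (W k : Set G)⁻¹ ⊆ W n ∧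
      closure (W k : Set G) ⊆ W n := fun n => by
    obtain ⟨k, hk⟩ := hstep n 0
    exact ⟨k, hk ▸ hroot (W n)⟩
  refine ⟨fun n => W n, ⟨fun n => (W n).isOpen, fun n => (W n).mem,
    fun n => (hroot_step n).imp fun _ => And.left, fun n => (hroot_step n).imp fun _ hk => hk.2.1,
    fun n => (hroot_step n).imp fun _ hk => hk.2.2, fun n x => ?_⟩,
    fun n => (hseed n).imp fun _ hk => congrArg _ hk⟩
  obtain ⟨i, hi⟩ := hconj (W n) x
  obtain ⟨k, hk⟩ := hstep n (i + 1)
  exact ⟨k, hk ▸ hi⟩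

end Group

section Quotient

variable {G : Type*} [Group G] [TopologicalSpace G] [IsTopologicalGroup G] {H : Subgroup G}

theorem isSeqCompact_preimage_mk_singleton (hH : IsSeqCompact (H : Set G)) (y : G ⧸ H) :
    IsSeqCompact ((QuotientGroup.mk : G → G ⧸ H) ⁻¹' {y}) := by
  obtain ⟨g, rfl⟩ := QuotientGroup.mk_surjective y
  rw [← image_singleton, QuotientGroup.preimage_image_mk_eq_mul, singleton_mul]
  exact hH.image (continuous_const_mul g).seqContinuous

/-- Otherwise a cluster point `q` of the `F`-factors and a subsequential limit `h₀` of the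
`H`-factors would give `x * (q * h₀) ∈ C`, i.e. `x ∈ C * H`. -/
theorem exists_mul_mul_notMem {F : ℕ → Set G} (hFa : Antitone F)
    (hF : SelectionsClusterIn (H : Set G) F) (hH : IsSeqCompact (H : Set G)) {C : Set G}
    (hC : IsClosed C) {x : G} (hx : x ∉ C * H) : ∃ m, ∀ f ∈ F m, ∀ h ∈ H, x * (f * h) ∉ C := by
  by_contra! hcon
  choose f hf h hh hfhC using hcon
  obtain ⟨h₀, hh₀, φ, hφ, hlim⟩ := hH fun n => hh n
  obtain ⟨q, hq, hclust⟩ := hF (f ∘ φ) fun n => hFa (hφ.id_le n) (hf (φ n))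
  have hmem : x * (q * h₀) ∈ C := by
    have hcont : Continuous fun p : G × G => x * (p.1 * p.2) := by fun_prop
    refine hC.mem_of_mapClusterPt ((hclust.prodMk_of_tendsto hlim).tendsto_comp
      (hcont.tendsto (q, h₀))) (Eventually.of_forall fun n => hfhC (φ n))
  exact hx ⟨x * (q * h₀), hmem, (q * h₀)⁻¹, H.inv_mem (H.mul_mem hq hh₀), by group⟩

theorem isClosedMap_mk_of_selectionsClusterIn {F : ℕ → Set G} (hFa : Antitone F)
    (hFo : ∀ m, IsOpen (F m) ∧ (1 : G) ∈ F m) (hF : SelectionsClusterIn (H : Set G) F)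
    (hH : IsSeqCompact (H : Set G)) : IsClosedMap (QuotientGroup.mk : G → G ⧸ H) := by
  intro C hC
  rw [← (QuotientGroup.isQuotientMap_mk H).isClosed_preimage,
    QuotientGroup.preimage_image_mk_eq_mul, ← isOpen_compl_iff, isOpen_iff_forall_mem_open]
  intro x hx
  obtain ⟨m, hm⟩ := exists_mul_mul_notMem hFa hF hH hC hx
  refine ⟨(x⁻¹ * ·) ⁻¹' F m, ?_, (hFo m).1.preimage (by fun_prop), by simpa using (hFo m).2⟩
  rintro y hy ⟨c, hc, h, hh, rfl⟩
  exact hm _ hy _ (H.inv_mem hh) (by simpa [mul_assoc] using hc)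

theorem metrizableSpace_quotient [H.Normal] (hHc : IsClosed (H : Set G))
    (hH : HasCountableCharacter (H : Set G)) : MetrizableSpace (G ⧸ H) := by
  obtain ⟨F, hFo, hFchar⟩ := hH
  have : IsClosed (H : Set G) := hHc
  have hbasis : (𝓝 (1 : G ⧸ H)).HasBasis (fun _ : ℕ => True)
      fun m => QuotientGroup.mk '' F m := by
    refine ⟨fun t => ⟨fun ht => ?_, fun ⟨m, _, hm⟩ => mem_of_superset ?_ hm⟩⟩
    · obtain ⟨Ω, hΩt, hΩo, hΩ1⟩ := mem_nhds_iff.1 ht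
      obtain ⟨m, hm⟩ := hFchar _ (hΩo.preimage QuotientGroup.continuous_mk) fun g hg => by
        simpa [(QuotientGroup.eq_one_iff g).2 hg] using hΩ1
      exact ⟨m, trivial, (image_subset_iff.2 hm).trans hΩt⟩
    · exact (QuotientGroup.isOpenMap_coe _ (hFo m).1).mem_nhds ⟨1, (hFo m).2 H.one_mem, rfl⟩
  have : (𝓝 (1 : G ⧸ H)).IsCountablyGenerated := hbasis.isCountablyGenerated
  let _ := IsTopologicalGroup.rightUniformSpace (G ⧸ H)
  have : (uniformity (G ⧸ H)).IsCountablyGenerated := by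
    rw [uniformity_eq_comap_nhds_one']
    infer_instance
  exact UniformSpace.metrizableSpace

end Quotient

section Main

variable {G : Type*} [Group G] [TopologicalSpace G] [IsTopologicalGroup G]

theorem OmegaBalanced.exists_normal_subgroup (hbal : OmegaBalanced G) (hq : StrictQSpace G)
    {O : Set G} (hO : IsOpen O) (hO1 : (1 : G) ∈ O) :
    ∃ H : Subgroup G, H.Normal ∧ IsClosed (H : Set G) ∧ IsSeqCompact (H : Set G) ∧
      HasCountableCharacter (H : Set G) ∧ (H : Set G) ⊆ O ∧
      IsClosedMap (QuotientGroup.mk : G → G ⧸ H) ∧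
      (∀ y : G ⧸ H, IsSeqCompact ((QuotientGroup.mk : G → G ⧸ H) ⁻¹' {y})) ∧
      MetrizableSpace (G ⧸ H) := by
  obtain ⟨U, hU, hUc⟩ := hq 1
  obtain ⟨W, hW, hWV⟩ := hbal.exists_isNormalSubgroupSeq fun n =>
    ⟨⟨U n ∩ O, (hU.1 n).1.inter hO⟩, (hU.1 n).2, hO1⟩
  set H := hW.subgroup
  have hHUO : ∀ n, (H : Set G) ⊆ U n ∩ O := fun n => by
    obtain ⟨k, hk⟩ := hWV n
    have hsub := hW.subgroup_subset k
    rw [hk] at hsub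
    exact hsub
  have hHU : ∀ n, (H : Set G) ⊆ U n := fun n => (hHUO n).trans inter_subset_left
  obtain ⟨F, hFa, hFo, hF⟩ :=
    hU.exists_antitone_selectionsClusterIn hW.isOpen hW.exists_closure_subset hHU
  have hHseq : IsSeqCompact (H : Set G) :=
    hUc.of_isClosed_subset hW.isClosed_subgroup (subset_iInter hHU)
  have := hW.subgroup_normal
  exact ⟨H, this, hW.isClosed_subgroup, hHseq, hF.hasCountableCharacter hFo,
    (hHUO 0).trans inter_subset_right,
    isClosedMap_mk_of_selectionsClusterIn hFa (fun m => ⟨(hFo m).1, (hFo m).2 H.one_mem⟩) hF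
      hHseq,
    isSeqCompact_preimage_mk_singleton hHseq,
    metrizableSpace_quotient hW.isClosed_subgroup (hF.hasCountableCharacter hFo)⟩

theorem omegaBalanced_of_forall_exists_normal_subset
    (h : ∀ O : Set G, IsOpen O → (1 : G) ∈ O → ∃ H : Subgroup G, H.Normal ∧
      HasCountableCharacter (H : Set G) ∧ (H : Set G) ⊆ O) : OmegaBalanced G := by
  intro U hU
  obtain ⟨H, hH, ⟨B, hB, hBchar⟩, hHU⟩ := h (interior U) isOpen_interior
    (mem_interior_iff_mem_nhds.2 hU)
  refine ⟨range B, countable_range B, forall_mem_range.2 fun n => ⟨(hB n).1, (hB n).2 H.one_mem⟩,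
    fun x => ?_⟩
  obtain ⟨n, hn⟩ := hBchar ((fun g => x * g * x⁻¹) ⁻¹' interior U)
    (isOpen_interior.preimage (by fun_prop)) fun g hg => hHU (hH.conj_mem g hg x)
  exact ⟨B n, mem_range_self n, fun v hv => interior_subset (hn hv)⟩

end Main

theorem omegaBalanced_and_strictQSpace_iff_general (G : Type*) [Group G] [TopologicalSpace G] [IsTopologicalGroup G] :
    (OmegaBalanced G ∧ StrictQSpace G) ↔
      ∀ O : Set G, IsOpen O → (1 : G) ∈ O →
        ∃ H : Subgroup G, H.Normal ∧ IsClosed (H : Set G) ∧ IsSeqCompact (H : Set G) ∧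
          HasCountableCharacter (H : Set G) ∧ (H : Set G) ⊆ O ∧
          IsClosedMap (QuotientGroup.mk : G → G ⧸ H) ∧
          (∀ y : G ⧸ H, IsSeqCompact ((QuotientGroup.mk : G → G ⧸ H) ⁻¹' {y})) ∧
          MetrizableSpace (G ⧸ H) := by
  refine ⟨fun ⟨hbal, hq⟩ O hO hO1 => hbal.exists_normal_subgroup hq hO hO1, fun h => ⟨?_, ?_⟩⟩
  · refine omegaBalanced_of_forall_exists_normal_subset fun O hO hO1 => ?_
    obtain ⟨H, hH, -, -, hchar, hHO, -⟩ := h O hO hO1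
    exact ⟨H, hH, hchar, hHO⟩
  · obtain ⟨H, -, -, -, -, -, hcl, hfib, hmetr⟩ := h univ isOpen_univ (mem_univ 1)
    exact strictQSpace_of_isClosedMap QuotientGroup.continuous_mk hcl hfib

theorem omegaBalanced_and_strictQSpace_iff (G : Type*) [Group G] [TopologicalSpace G] [IsTopologicalGroup G] [T2Space G] :
    (OmegaBalanced G ∧ StrictQSpace G) ↔
      ∀ O : Set G, IsOpen O → (1 : G) ∈ O →
        ∃ H : Subgroup G, H.Normal ∧ IsClosed (H : Set G) ∧ IsSeqCompact (H : Set G) ∧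
          HasCountableCharacter (H : Set G) ∧ (H : Set G) ⊆ O ∧
          IsClosedMap (QuotientGroup.mk : G → G ⧸ H) ∧
          (∀ y : G ⧸ H, IsSeqCompact ((QuotientGroup.mk : G → G ⧸ H) ⁻¹' {y})) ∧
          MetrizableSpace (G ⧸ H) :=
  omegaBalanced_and_strictQSpace_iff_general G
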